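/- For all natural numbers i, n and real k, (n+k)^i = Σ_{r=0}^{i} C(n,r) · b_{i,r,k}. -/
import Mathlib


open Finset

noncomputable def msn (i j : ℕ) (k : ℝ) : ℝ :=
  ∑ r ∈ Finset.range (j + 1), (j.choose r : ℝ) * (-1 : ℝ) ^ (j - r) * ((r : ℝ) + k) ^ i

noncomputable def msn' (i j : ℕ) (k : ℝ) : ℝ :=
  ∑ r ∈ Finset.range (j + 1), (j.choose r : ℝ) * (-1 : ℝ) ^ r * ((r : ℝ) + k) ^ i

lemma msn_eq (i j : ℕ) (k : ℝ) : msn i j k = (-1 : ℝ) ^ j * msn' i j k := by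
  unfold msn msn'
  rw [Finset.mul_sum]
  refine Finset.sum_congr rfl fun r hr => ?_
  have hrj : r ≤ j := Nat.lt_succ_iff.mp (Finset.mem_range.mp hr)
  obtain ⟨m, rfl⟩ := Nat.exists_eq_add_of_le hrj
  have : ((-1 : ℝ)) ^ (r + m - r) = (-1 : ℝ) ^ (r + m) * (-1 : ℝ) ^ r := by
    rw [Nat.add_sub_cancel_left, pow_add, mul_comm ((-1:ℝ)^r), mul_assoc, ← pow_add,
      ← two_mul, pow_mul]
    norm_num
  rw [this]; ring

lemma msn'_succ (i j : ℕ) (k : ℝ) :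
    msn' i (j + 1) k = msn' i j k - msn' i j (k + 1) := by
  unfold msn'
  rw [Finset.sum_range_succ' _ (j + 1)]
  have split : (∑ r ∈ Finset.range (j + 1),
      ((j + 1).choose (r + 1) : ℝ) * (-1 : ℝ) ^ (r + 1) * (((r + 1 : ℕ) : ℝ) + k) ^ i)
      = (∑ r ∈ Finset.range (j + 1),
          (j.choose r : ℝ) * (-1 : ℝ) ^ (r + 1) * (((r + 1 : ℕ) : ℝ) + k) ^ i)
        + (∑ r ∈ Finset.range (j + 1),
          (j.choose (r + 1) : ℝ) * (-1 : ℝ) ^ (r + 1) * (((r + 1 : ℕ) : ℝ) + k) ^ i) := by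
    rw [← Finset.sum_add_distrib]
    refine Finset.sum_congr rfl fun r _ => ?_
    rw [Nat.choose_succ_succ]
    push_cast; ring
  rw [split]
  have A : (∑ r ∈ Finset.range (j + 1),
      (j.choose r : ℝ) * (-1 : ℝ) ^ (r + 1) * (((r + 1 : ℕ) : ℝ) + k) ^ i)
      = -(∑ r ∈ Finset.range (j + 1), (j.choose r : ℝ) * (-1 : ℝ) ^ r * ((r : ℝ) + (k + 1)) ^ i) := by
    rw [← Finset.sum_neg_distrib]
    refine Finset.sum_congr rfl fun r _ => ?_
    push_cast; ring_nf
  have B : (∑ r ∈ Finset.range (j + 1),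
      (j.choose (r + 1) : ℝ) * (-1 : ℝ) ^ (r + 1) * (((r + 1 : ℕ) : ℝ) + k) ^ i)
      = ∑ r ∈ Finset.range j,
      (j.choose (r + 1) : ℝ) * (-1 : ℝ) ^ (r + 1) * (((r + 1 : ℕ) : ℝ) + k) ^ i := by
    rw [Finset.sum_range_succ]
    simp [Nat.choose_succ_self]
  have C : (∑ r ∈ Finset.range (j + 1), (j.choose r : ℝ) * (-1 : ℝ) ^ r * ((r : ℝ) + k) ^ i)
      = (∑ r ∈ Finset.range j,
        (j.choose (r + 1) : ℝ) * (-1 : ℝ) ^ (r + 1) * (((r + 1 : ℕ) : ℝ) + k) ^ i)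
        + (j.choose 0 : ℝ) * (-1 : ℝ) ^ 0 * (((0 : ℕ) : ℝ) + k) ^ i := by
    rw [Finset.sum_range_succ' _ j]
  rw [A, B]
  rw [C]
  simp
  ring

lemma msn_succ (i j : ℕ) (k : ℝ) :
    msn i (j + 1) k = msn i j (k + 1) - msn i j k := by
  rw [msn_eq, msn_eq, msn_eq, msn'_succ]
  ring

lemma msn_shift (i j : ℕ) (k : ℝ) :
    msn i j (k + 1) = ∑ t ∈ Finset.range (i + 1), (i.choose t : ℝ) * msn t j k := by
  unfold msn
  simp only [Finset.mul_sum]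
  rw [Finset.sum_comm]
  refine Finset.sum_congr rfl fun r _ => ?_
  have h : ((r : ℝ) + (k + 1)) ^ i
      = ∑ t ∈ Finset.range (i + 1), ((r : ℝ) + k) ^ t * 1 ^ (i - t) * (i.choose t : ℝ) := by
    rw [← add_pow]; ring_nf
  rw [h, Finset.mul_sum]
  refine Finset.sum_congr rfl fun t _ => ?_
  ring

lemma msn_zero_of_lt : ∀ j i, i < j → ∀ k : ℝ, msn i j k = 0 := by
  intro j
  induction j with
  | zero => intro i hi; omega
  | succ j ih =>
    intro i hi k
    have hij : i ≤ j := Nat.lt_succ_iff.mp hi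
    rw [msn_succ, msn_shift]
    rw [Finset.sum_range_succ]
    have : ∀ t ∈ Finset.range i, (i.choose t : ℝ) * msn t j k = 0 := by
      intro t ht
      have : t < j := lt_of_lt_of_le (Finset.mem_range.mp ht) hij
      rw [ih t this k, mul_zero]
    rw [Finset.sum_congr rfl this]
    simp

theorem stmt (i n : ℕ) (k : ℝ) : ((n : ℝ) + k) ^ i = ∑ r ∈ Finset.range (i + 1), (n.choose r : ℝ) * msn i r k := by
  induction n generalizing k with
  | zero =>
    simp only [Nat.cast_zero, zero_add]
    rw [Finset.sum_range_succ' _ i]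
    simp [msn]
  | succ n ih =>
    have key : ((n : ℝ) + (k + 1)) ^ i
        = ∑ r ∈ Finset.range (i + 1), (n.choose r : ℝ) * msn i r (k + 1) := ih (k + 1)
    have lhs_eq : (((n + 1 : ℕ) : ℝ) + k) ^ i = ((n : ℝ) + (k + 1)) ^ i := by push_cast; ring_nf
    rw [lhs_eq, key]
    have step : ∀ r, msn i r (k + 1) = msn i (r + 1) k + msn i r k := by
      intro r; rw [msn_succ]; ring
    simp only [step, mul_add]
    rw [Finset.sum_add_distrib]
    -- first sum: drop the last term, which vanishes
    have h1 : (∑ r ∈ Finset.range (i + 1), (n.choose r : ℝ) * msn i (r + 1) k)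
        = ∑ r ∈ Finset.range i, (n.choose r : ℝ) * msn i (r + 1) k := by
      rw [Finset.sum_range_succ]
      rw [msn_zero_of_lt (i + 1) i (Nat.lt_succ_self i) k]
      simp
    rw [h1]
    -- RHS: peel off first term via sum_range_succ'
    rw [Finset.sum_range_succ' (fun r => ((n + 1).choose r : ℝ) * msn i r k) i]
    rw [Finset.sum_range_succ' (fun r => (n.choose r : ℝ) * msn i r k) i]
    have h2 : ∀ r ∈ Finset.range i, ((n + 1).choose (r + 1) : ℝ) * msn i (r + 1) k
        = (n.choose r : ℝ) * msn i (r + 1) k + (n.choose (r + 1) : ℝ) * msn i (r + 1) k := by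
      intro r _
      rw [Nat.choose_succ_succ]
      push_cast; ring
    rw [Finset.sum_congr rfl h2, Finset.sum_add_distrib]
    simp
    ring
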